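/- In the discrimination of the two non-extremal channels N₁ and N₂, if γ_m² < αβ < γ_M², |γ₁|+|γ₂| > |α+β|, α = β, and |γ_m| ≠ |α|, then side entanglement is useful: S₂ > S₁. -/

import Mathlib

open Matrix
open scoped Kronecker

noncomputable section

/-- First Kraus operator of the extremal qubit channel `N_{φ,θ}`:
diagonal entries `cos θ` and `cos φ`. -/
def K0 (φ θ : ℝ) : Matrix (Fin 2) (Fin 2) ℂ :=
  !![(Real.cos θ : ℂ), 0; 0, (Real.cos φ : ℂ)]

/-- Second Kraus operator of the extremal qubit channel `N_{φ,θ}`: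
(1,2)-entry `sin φ`, (2,1)-entry `sin θ`. -/
def K1 (φ θ : ℝ) : Matrix (Fin 2) (Fin 2) ℂ :=
  !![0, (Real.sin φ : ℂ); (Real.sin θ : ℂ), 0]

/-- The qubit channel `N_{φ,θ}(ρ) = K₀ ρ K₀* + K₁ ρ K₁*`. -/
def chan (φ θ : ℝ) (ρ : Matrix (Fin 2) (Fin 2) ℂ) : Matrix (Fin 2) (Fin 2) ℂ :=
  K0 φ θ * ρ * (K0 φ θ)ᴴ + K1 φ θ * ρ * (K1 φ θ)ᴴ

/-- The 2×2 identity matrix. -/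
def I2 : Matrix (Fin 2) (Fin 2) ℂ := 1

/-- The channel `id ⊗ N_{φ,θ}` on two qubits, via Kronecker products of the Kraus
operators with the identity. -/
def chanE (φ θ : ℝ) (ρ : Matrix (Fin 2 × Fin 2) (Fin 2 × Fin 2) ℂ) :
    Matrix (Fin 2 × Fin 2) (Fin 2 × Fin 2) ℂ :=
  (I2 ⊗ₖ K0 φ θ) * ρ * (I2 ⊗ₖ K0 φ θ)ᴴ + (I2 ⊗ₖ K1 φ θ) * ρ * (I2 ⊗ₖ K1 φ θ)ᴴ

open scoped Classical in
/-- Trace norm of a Hermitian matrix: the sum of the absolute values of its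
eigenvalues (junk value `0` for non-Hermitian input). -/
def traceNorm {n : Type*} [Fintype n] [DecidableEq n] (M : Matrix n n ℂ) : ℝ :=
  if h : M.IsHermitian then ∑ i, |h.eigenvalues i| else 0

/-- The rank-one projector `ρ_v = v v*` on one qubit. -/
def outer2 (v : EuclideanSpace ℂ (Fin 2)) : Matrix (Fin 2) (Fin 2) ℂ :=
  fun i j => v i * star (v j)

/-- The rank-one projector `ρ_w = w w*` on two qubits. -/
def outer4 (w : EuclideanSpace ℂ (Fin 2 × Fin 2)) :
    Matrix (Fin 2 × Fin 2) (Fin 2 × Fin 2) ℂ :=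
  fun i j => w i * star (w j)

/-- Optimal single-qubit distinguishability of `N_{φ₁,θ₁}` and `N_{φ₂,θ₂}`. -/
def S1 (φ₁ θ₁ φ₂ θ₂ : ℝ) : ℝ :=
  ⨆ v : {v : EuclideanSpace ℂ (Fin 2) // ‖v‖ = 1},
    traceNorm (chan φ₁ θ₁ (outer2 v.1) - chan φ₂ θ₂ (outer2 v.1))

/-- Optimal entanglement-assisted distinguishability of `N_{φ₁,θ₁}` and `N_{φ₂,θ₂}`. -/
def S2 (φ₁ θ₁ φ₂ θ₂ : ℝ) : ℝ :=
  ⨆ w : {w : EuclideanSpace ℂ (Fin 2 × Fin 2) // ‖w‖ = 1},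
    traceNorm (chanE φ₁ θ₁ (outer4 w.1) - chanE φ₂ θ₂ (outer4 w.1))

/-- The non-extremal qubit channel `λ N_{φ,θ} + (1−λ) N_{φ',θ'}`. -/
def chanC (l φ θ φ' θ' : ℝ) (ρ : Matrix (Fin 2) (Fin 2) ℂ) : Matrix (Fin 2) (Fin 2) ℂ :=
  (l : ℂ) • chan φ θ ρ + ((1 - l : ℝ) : ℂ) • chan φ' θ' ρ

/-- The channel `id ⊗ (λ N_{φ,θ} + (1−λ) N_{φ',θ'})` on two qubits. -/
def chanCE (l φ θ φ' θ' : ℝ) (ρ : Matrix (Fin 2 × Fin 2) (Fin 2 × Fin 2) ℂ) :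
    Matrix (Fin 2 × Fin 2) (Fin 2 × Fin 2) ℂ :=
  (l : ℂ) • chanE φ θ ρ + ((1 - l : ℝ) : ℂ) • chanE φ' θ' ρ

/-- Optimal single-qubit distinguishability of the two non-extremal channels. -/
def S1c (l₁ φ₁ θ₁ φ₁' θ₁' l₂ φ₂ θ₂ φ₂' θ₂' : ℝ) : ℝ :=
  ⨆ v : {v : EuclideanSpace ℂ (Fin 2) // ‖v‖ = 1},
    traceNorm (chanC l₁ φ₁ θ₁ φ₁' θ₁' (outer2 v.1) - chanC l₂ φ₂ θ₂ φ₂' θ₂' (outer2 v.1))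

/-- Optimal entanglement-assisted distinguishability of the two non-extremal channels. -/
def S2c (l₁ φ₁ θ₁ φ₁' θ₁' l₂ φ₂ θ₂ φ₂' θ₂' : ℝ) : ℝ :=
  ⨆ w : {w : EuclideanSpace ℂ (Fin 2 × Fin 2) // ‖w‖ = 1},
    traceNorm (chanCE l₁ φ₁ θ₁ φ₁' θ₁' (outer4 w.1) - chanCE l₂ φ₂ θ₂ φ₂' θ₂' (outer4 w.1))


/-! ### Auxiliary material for the proof -/

set_option maxHeartbeats 4000000

section AuxTraceNorm

open scoped Classical

/-- Frobenius norm squared. -/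
def auxFrobSq {n : Type*} [Fintype n] (M : Matrix n n ℂ) : ℝ :=
  ∑ i, ∑ j, Complex.normSq (M i j)

lemma auxFrobSq_nonneg {n : Type*} [Fintype n] (M : Matrix n n ℂ) : 0 ≤ auxFrobSq M := by
  apply Finset.sum_nonneg; intro i _; apply Finset.sum_nonneg; intro j _
  exact Complex.normSq_nonneg _

lemma aux_trace_mul_self_eq {n : Type*} [Fintype n] [DecidableEq n] (M : Matrix n n ℂ)
    (hM : M.IsHermitian) : trace (M * M) = (auxFrobSq M : ℂ) := by
  have h : Mᴴ * M = M * M := by rw [hM.eq]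
  rw [← h]
  simp only [trace, diag, mul_apply, conjTranspose_apply, auxFrobSq]
  push_cast
  rw [Finset.sum_comm]
  congr 1; ext i; congr 1; ext j
  simp [Complex.normSq_eq_conj_mul_self, Complex.star_def]

lemma aux_sum_eig_sq {n : Type*} [Fintype n] [DecidableEq n] (M : Matrix n n ℂ)
    (hM : M.IsHermitian) : ∑ i, hM.eigenvalues i ^ 2 = auxFrobSq M := by
  have key : trace (M * M) = ((∑ i, hM.eigenvalues i ^ 2 : ℝ) : ℂ) := by
    set U : Matrix n n ℂ := (hM.eigenvectorUnitary : Matrix n n ℂ) with hU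
    set D : Matrix n n ℂ := diagonal (RCLike.ofReal ∘ hM.eigenvalues) with hD
    have hVU : star U * U = 1 := Unitary.coe_star_mul_self hM.eigenvectorUnitary
    have hsp : M = U * D * star U := hM.spectral_theorem
    have h2 : M * M = U * (D * D) * star U := by
      rw [hsp]
      calc (U * D * star U) * (U * D * star U) = U * D * (star U * U) * D * star U := by
            simp only [mul_assoc]
        _ = U * (D * D) * star U := by rw [hVU]; simp only [mul_one, mul_assoc]
    rw [h2, trace_mul_cycle, ← mul_assoc, hVU, one_mul, hD, diagonal_mul_diagonal,
      trace_diagonal]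
    push_cast
    congr 1; ext i; simp [sq]
  have h3 := aux_trace_mul_self_eq M hM
  rw [key] at h3
  exact_mod_cast h3

lemma aux_traceNorm_le_sqrt {n : Type*} [Fintype n] [DecidableEq n] (M : Matrix n n ℂ) :
    traceNorm M ≤ Real.sqrt (Fintype.card n * auxFrobSq M) := by
  unfold traceNorm
  split_ifs with h
  · have h1 : (∑ i, |h.eigenvalues i|) ^ 2 ≤ (Fintype.card n : ℝ) * ∑ i, |h.eigenvalues i| ^ 2 := by
      simpa using sq_sum_le_card_mul_sum_sq (s := Finset.univ) (f := fun i => |h.eigenvalues i|)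
    have h2 : ∑ i, |h.eigenvalues i| ^ 2 = auxFrobSq M := by
      rw [← aux_sum_eig_sq M h]; congr 1; ext i; rw [sq_abs]
    rw [h2] at h1
    have h3 : 0 ≤ ∑ i, |h.eigenvalues i| := Finset.sum_nonneg fun i _ => abs_nonneg _
    calc ∑ i, |h.eigenvalues i| = Real.sqrt ((∑ i, |h.eigenvalues i|) ^ 2) := by
          rw [Real.sqrt_sq h3]
      _ ≤ Real.sqrt (Fintype.card n * auxFrobSq M) := Real.sqrt_le_sqrt h1
  · exact Real.sqrt_nonneg _

lemma aux_re_trace_mul_le {n : Type*} [Fintype n] [DecidableEq n] (M : Matrix n n ℂ)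
    (hM : M.IsHermitian) (B : Matrix n n ℂ) (hB : B ∈ Matrix.unitaryGroup n ℂ) :
    (trace (M * B)).re ≤ traceNorm M := by
  set U : Matrix n n ℂ := (hM.eigenvectorUnitary : Matrix n n ℂ) with hUdef
  have hUmem : U ∈ Matrix.unitaryGroup n ℂ := hM.eigenvectorUnitary.2
  set W : Matrix n n ℂ := star U * B * U with hW
  have hWmem : W ∈ Matrix.unitaryGroup n ℂ :=
    mul_mem (mul_mem (Unitary.star_mem hUmem) hB) hUmem
  have hsp : M = U * diagonal (RCLike.ofReal ∘ hM.eigenvalues) * star U := hM.spectral_theorem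
  have htr : trace (M * B) = ∑ i, (hM.eigenvalues i : ℂ) * W i i := by
    conv_lhs => rw [hsp]
    have h2 : U * diagonal (RCLike.ofReal ∘ hM.eigenvalues) * star U * B
        = U * (diagonal (RCLike.ofReal ∘ hM.eigenvalues) * (star U * B)) := by
      simp only [mul_assoc]
    rw [h2, trace_mul_comm]
    simp only [mul_assoc]
    rw [show star U * (B * U) = W by rw [hW]; simp only [mul_assoc]]
    simp [trace, diag, diagonal_mul]
  rw [htr]
  unfold traceNorm
  rw [dif_pos hM]
  rw [Complex.re_sum]
  apply Finset.sum_le_sum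
  intro i _
  have h1 : ((hM.eigenvalues i : ℂ) * W i i).re = hM.eigenvalues i * (W i i).re := by
    simp [Complex.mul_re]
  rw [h1]
  have h2 : ‖W i i‖ ≤ 1 := entry_norm_bound_of_unitary hWmem i i
  have h3 : |(W i i).re| ≤ 1 := le_trans (Complex.abs_re_le_norm _) h2
  calc hM.eigenvalues i * (W i i).re ≤ |hM.eigenvalues i * (W i i).re| := le_abs_self _
    _ = |hM.eigenvalues i| * |(W i i).re| := abs_mul _ _
    _ ≤ |hM.eigenvalues i| * 1 := mul_le_mul_of_nonneg_left h3 (abs_nonneg _)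
    _ = |hM.eigenvalues i| := mul_one _

end AuxTraceNorm

section AuxMatrices

/-- The single-qubit difference matrix. -/
lemma aux_chanC_diff (l₁ l₂ θ₁ φ₁ θ₁' φ₁' θ₂ φ₂ θ₂' φ₂' : ℝ) (α β γ₁ γ₂ : ℝ)
    (hα : α = (l₁ * Real.cos θ₁ ^ 2 + (1 - l₁) * Real.cos θ₁' ^ 2) -
              (l₂ * Real.cos θ₂ ^ 2 + (1 - l₂) * Real.cos θ₂' ^ 2))
    (hβ : β = (l₁ * Real.cos φ₁ ^ 2 + (1 - l₁) * Real.cos φ₁' ^ 2) -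
              (l₂ * Real.cos φ₂ ^ 2 + (1 - l₂) * Real.cos φ₂' ^ 2))
    (hγ₁ : γ₁ = l₁ * Real.cos φ₁ * Real.cos θ₁ + (1 - l₁) * Real.cos φ₁' * Real.cos θ₁' -
                l₂ * Real.cos φ₂ * Real.cos θ₂ - (1 - l₂) * Real.cos φ₂' * Real.cos θ₂')
    (hγ₂ : γ₂ = l₁ * Real.sin φ₁ * Real.sin θ₁ + (1 - l₁) * Real.sin φ₁' * Real.sin θ₁' -
                l₂ * Real.sin φ₂ * Real.sin θ₂ - (1 - l₂) * Real.sin φ₂' * Real.sin θ₂')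
    (v : EuclideanSpace ℂ (Fin 2)) :
    chanC l₁ φ₁ θ₁ φ₁' θ₁' (outer2 v) - chanC l₂ φ₂ θ₂ φ₂' θ₂' (outer2 v) =
    !![((α * Complex.normSq (v 0) - β * Complex.normSq (v 1) : ℝ) : ℂ),
       (γ₁:ℂ) * (v 0 * star (v 1)) + (γ₂:ℂ) * (star (v 0) * v 1);
       (γ₁:ℂ) * (star (v 0) * v 1) + (γ₂:ℂ) * (v 0 * star (v 1)),
       ((β * Complex.normSq (v 1) - α * Complex.normSq (v 0) : ℝ) : ℂ)] := by
  have p1 : (Real.sin φ₁ : ℂ)^2 = 1 - (Real.cos φ₁ : ℂ)^2 := by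
    rw [← Complex.ofReal_pow, ← Complex.ofReal_pow, Real.sin_sq]; push_cast; ring
  have p2 : (Real.sin φ₁' : ℂ)^2 = 1 - (Real.cos φ₁' : ℂ)^2 := by
    rw [← Complex.ofReal_pow, ← Complex.ofReal_pow, Real.sin_sq]; push_cast; ring
  have p3 : (Real.sin φ₂ : ℂ)^2 = 1 - (Real.cos φ₂ : ℂ)^2 := by
    rw [← Complex.ofReal_pow, ← Complex.ofReal_pow, Real.sin_sq]; push_cast; ring
  have p4 : (Real.sin φ₂' : ℂ)^2 = 1 - (Real.cos φ₂' : ℂ)^2 := by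
    rw [← Complex.ofReal_pow, ← Complex.ofReal_pow, Real.sin_sq]; push_cast; ring
  have q1 : (Real.sin θ₁ : ℂ)^2 = 1 - (Real.cos θ₁ : ℂ)^2 := by
    rw [← Complex.ofReal_pow, ← Complex.ofReal_pow, Real.sin_sq]; push_cast; ring
  have q2 : (Real.sin θ₁' : ℂ)^2 = 1 - (Real.cos θ₁' : ℂ)^2 := by
    rw [← Complex.ofReal_pow, ← Complex.ofReal_pow, Real.sin_sq]; push_cast; ring
  have q3 : (Real.sin θ₂ : ℂ)^2 = 1 - (Real.cos θ₂ : ℂ)^2 := by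
    rw [← Complex.ofReal_pow, ← Complex.ofReal_pow, Real.sin_sq]; push_cast; ring
  have q4 : (Real.sin θ₂' : ℂ)^2 = 1 - (Real.cos θ₂' : ℂ)^2 := by
    rw [← Complex.ofReal_pow, ← Complex.ofReal_pow, Real.sin_sq]; push_cast; ring
  subst hα hβ hγ₁ hγ₂
  ext i j
  fin_cases i <;> fin_cases j <;>
    simp only [chanC, chan, K0, K1, outer2, Matrix.mul_apply, Matrix.sub_apply, Fin.sum_univ_two,
      Matrix.conjTranspose_apply, Complex.star_def, Matrix.smul_apply, Matrix.add_apply,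
      Matrix.cons_val', Matrix.cons_val_zero, Matrix.cons_val_one, Matrix.head_cons,
      Matrix.empty_val', Matrix.cons_val_fin_one, Matrix.head_fin_const, Matrix.of_apply,
      ← Complex.mul_conj, Complex.ofReal_mul, Complex.ofReal_sub, Complex.ofReal_add,
      Complex.ofReal_pow, Complex.ofReal_one, map_zero, _root_.map_one, Complex.conj_ofReal,
      mul_zero, zero_mul, add_zero, zero_add, _root_.map_mul, smul_eq_mul, Fin.mk_zero,
      Fin.mk_one, Fin.isValue]
  · linear_combination (v 1 * (starRingEnd ℂ) (v 1)) *
      ((l₁:ℂ) * p1 + ((1:ℂ)-l₁) * p2 - (l₂:ℂ) * p3 - ((1:ℂ)-l₂) * p4)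
  · ring1
  · ring1
  · linear_combination (v 0 * (starRingEnd ℂ) (v 0)) *
      ((l₁:ℂ) * q1 + ((1:ℂ)-l₁) * q2 - (l₂:ℂ) * q3 - ((1:ℂ)-l₂) * q4)

/-- The Bell state. -/
def auxBell : EuclideanSpace ℂ (Fin 2 × Fin 2) :=
  WithLp.toLp 2 (fun p : Fin 2 × Fin 2 => if p.1 = p.2 then ((Real.sqrt 2 : ℝ) : ℂ)⁻¹ else 0)

lemma auxBell_norm : ‖auxBell‖ = 1 := by
  rw [EuclideanSpace.norm_eq]
  have key : ∀ p : Fin 2 × Fin 2, ‖auxBell p‖ ^ 2 = if p.1 = p.2 then (2:ℝ)⁻¹ else 0 := by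
    intro p
    by_cases h : p.1 = p.2 <;> simp [auxBell, h]
  simp only [key]
  rw [Fintype.sum_prod_type, Fin.sum_univ_two, Fin.sum_univ_two]
  norm_num

lemma aux_outer4_bell :
    outer4 auxBell = Matrix.of fun p q => if p.1 = p.2 ∧ q.1 = q.2 then (1/2 : ℂ) else 0 := by
  have key : (((Real.sqrt 2)⁻¹ : ℝ) : ℂ) * (((Real.sqrt 2)⁻¹ : ℝ) : ℂ) = 1/2 := by
    rw [← Complex.ofReal_mul, ← mul_inv, Real.mul_self_sqrt (by norm_num)]
    norm_num
  ext p q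
  by_cases hp : p.1 = p.2 <;> by_cases hq : q.1 = q.2 <;>
    simp [outer4, auxBell, hp, hq, Complex.star_def, key, ← Complex.ofReal_inv,
      Complex.conj_ofReal]

/-- Explicit form of the two-qubit difference matrix on the Bell state. -/
def auxMb (α γ₁ γ₂ : ℝ) : Matrix (Fin 2 × Fin 2) (Fin 2 × Fin 2) ℂ := fun p q =>
  if p = q then (if p.1 = p.2 then ((α/2 : ℝ) : ℂ) else ((-(α/2) : ℝ) : ℂ))
  else if p.1 ≠ q.1 ∧ p.2 ≠ q.2 then (if p.1 = p.2 then ((γ₁/2 : ℝ) : ℂ) else ((γ₂/2 : ℝ) : ℂ))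
  else 0

/-- The dual sign matrix. -/
def auxBd (s₁ s₂ s₃ s₄ : ℝ) : Matrix (Fin 2 × Fin 2) (Fin 2 × Fin 2) ℂ := fun p q =>
  if p = q then (if p.1 = p.2 then (((s₁+s₂)/2 : ℝ) : ℂ) else (((s₃+s₄)/2 : ℝ) : ℂ))
  else if p.1 ≠ q.1 ∧ p.2 ≠ q.2 then
    (if p.1 = p.2 then (((s₁-s₂)/2 : ℝ) : ℂ) else (((s₃-s₄)/2 : ℝ) : ℂ))
  else 0

lemma auxMb_isHermitian (α γ₁ γ₂ : ℝ) : (auxMb α γ₁ γ₂).IsHermitian := by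
  unfold Matrix.IsHermitian
  ext ⟨i,k⟩ ⟨j,l⟩
  fin_cases i <;> fin_cases k <;> fin_cases j <;> fin_cases l <;>
    simp [auxMb, Matrix.conjTranspose_apply, Complex.conj_ofReal, Prod.ext_iff]

lemma auxBd_unitary (s₁ s₂ s₃ s₄ : ℝ) (h1 : s₁^2 = 1) (h2 : s₂^2 = 1) (h3 : s₃^2 = 1)
    (h4 : s₄^2 = 1) : auxBd s₁ s₂ s₃ s₄ ∈ Matrix.unitaryGroup (Fin 2 × Fin 2) ℂ := by
  have c1 : (s₁:ℂ)^2 = 1 := by exact_mod_cast congrArg (fun x:ℝ => (x:ℂ)) h1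
  have c2 : (s₂:ℂ)^2 = 1 := by exact_mod_cast congrArg (fun x:ℝ => (x:ℂ)) h2
  have c3 : (s₃:ℂ)^2 = 1 := by exact_mod_cast congrArg (fun x:ℝ => (x:ℂ)) h3
  have c4 : (s₄:ℂ)^2 = 1 := by exact_mod_cast congrArg (fun x:ℝ => (x:ℂ)) h4
  rw [Matrix.mem_unitaryGroup_iff]
  ext ⟨i,k⟩ ⟨j,l⟩
  fin_cases i <;> fin_cases k <;> fin_cases j <;> fin_cases l <;>
    simp only [auxBd, Matrix.mul_apply, Fintype.sum_prod_type, Fin.sum_univ_two,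
      Matrix.one_apply, star_apply, Matrix.conjTranspose_apply, RCLike.star_def,
      Complex.conj_ofReal, Complex.ofReal_div, Complex.ofReal_add, Complex.ofReal_sub,
      Fin.mk_zero, Fin.mk_one, Fin.isValue, Prod.mk.injEq, ne_eq] <;>
    norm_num [Prod.ext_iff, Fin.ext_iff, map_ofNat] <;>
    first
      | ring1
      | (linear_combination (c1 + c2) / 2; done)
      | (linear_combination (c3 + c4) / 2; done)
      | (linear_combination (c1 - c2) / 2; done)
      | (linear_combination (c2 - c1) / 2; done)
      | (linear_combination (c3 - c4) / 2; done)
      | (linear_combination (c4 - c3) / 2; done)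

lemma auxMb_trace_Bd (α γ₁ γ₂ s₁ s₂ s₃ s₄ : ℝ) :
    Matrix.trace (auxMb α γ₁ γ₂ * auxBd s₁ s₂ s₃ s₄)
      = ((((α+γ₁)*s₁ + (α-γ₁)*s₂ + (-α+γ₂)*s₃ + (-α-γ₂)*s₄)/4 * 2 : ℝ) : ℂ) := by
  simp only [Matrix.trace, Matrix.diag, Matrix.mul_apply, Fintype.sum_prod_type,
    Fin.sum_univ_two, auxMb, auxBd, Fin.isValue]
  norm_num [Prod.ext_iff, Fin.ext_iff]
  push_cast
  ring

/-- The two-qubit difference matrix on the Bell state. -/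
lemma aux_chanCE_diff_bell (l₁ l₂ θ₁ φ₁ θ₁' φ₁' θ₂ φ₂ θ₂' φ₂' : ℝ) (α β γ₁ γ₂ : ℝ)
    (hα : α = (l₁ * Real.cos θ₁ ^ 2 + (1 - l₁) * Real.cos θ₁' ^ 2) -
              (l₂ * Real.cos θ₂ ^ 2 + (1 - l₂) * Real.cos θ₂' ^ 2))
    (hβ : β = (l₁ * Real.cos φ₁ ^ 2 + (1 - l₁) * Real.cos φ₁' ^ 2) -
              (l₂ * Real.cos φ₂ ^ 2 + (1 - l₂) * Real.cos φ₂' ^ 2))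
    (hγ₁ : γ₁ = l₁ * Real.cos φ₁ * Real.cos θ₁ + (1 - l₁) * Real.cos φ₁' * Real.cos θ₁' -
                l₂ * Real.cos φ₂ * Real.cos θ₂ - (1 - l₂) * Real.cos φ₂' * Real.cos θ₂')
    (hγ₂ : γ₂ = l₁ * Real.sin φ₁ * Real.sin θ₁ + (1 - l₁) * Real.sin φ₁' * Real.sin θ₁' -
                l₂ * Real.sin φ₂ * Real.sin θ₂ - (1 - l₂) * Real.sin φ₂' * Real.sin θ₂')
    (hc4 : α = β) :
    chanCE l₁ φ₁ θ₁ φ₁' θ₁' (outer4 auxBell) - chanCE l₂ φ₂ θ₂ φ₂' θ₂' (outer4 auxBell)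
      = auxMb α γ₁ γ₂ := by
  have p1 : (Real.sin φ₁ : ℂ)^2 = 1 - (Real.cos φ₁ : ℂ)^2 := by
    rw [← Complex.ofReal_pow, ← Complex.ofReal_pow, Real.sin_sq]; push_cast; ring
  have p2 : (Real.sin φ₁' : ℂ)^2 = 1 - (Real.cos φ₁' : ℂ)^2 := by
    rw [← Complex.ofReal_pow, ← Complex.ofReal_pow, Real.sin_sq]; push_cast; ring
  have p3 : (Real.sin φ₂ : ℂ)^2 = 1 - (Real.cos φ₂ : ℂ)^2 := by
    rw [← Complex.ofReal_pow, ← Complex.ofReal_pow, Real.sin_sq]; push_cast; ring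
  have p4 : (Real.sin φ₂' : ℂ)^2 = 1 - (Real.cos φ₂' : ℂ)^2 := by
    rw [← Complex.ofReal_pow, ← Complex.ofReal_pow, Real.sin_sq]; push_cast; ring
  have q1 : (Real.sin θ₁ : ℂ)^2 = 1 - (Real.cos θ₁ : ℂ)^2 := by
    rw [← Complex.ofReal_pow, ← Complex.ofReal_pow, Real.sin_sq]; push_cast; ring
  have q2 : (Real.sin θ₁' : ℂ)^2 = 1 - (Real.cos θ₁' : ℂ)^2 := by
    rw [← Complex.ofReal_pow, ← Complex.ofReal_pow, Real.sin_sq]; push_cast; ring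
  have q3 : (Real.sin θ₂ : ℂ)^2 = 1 - (Real.cos θ₂ : ℂ)^2 := by
    rw [← Complex.ofReal_pow, ← Complex.ofReal_pow, Real.sin_sq]; push_cast; ring
  have q4 : (Real.sin θ₂' : ℂ)^2 = 1 - (Real.cos θ₂' : ℂ)^2 := by
    rw [← Complex.ofReal_pow, ← Complex.ofReal_pow, Real.sin_sq]; push_cast; ring
  have cβ : ((l₁:ℂ) * (Real.cos θ₁:ℂ) ^ 2 + (1 - (l₁:ℂ)) * (Real.cos θ₁':ℂ) ^ 2) -
      ((l₂:ℂ) * (Real.cos θ₂:ℂ) ^ 2 + (1 - (l₂:ℂ)) * (Real.cos θ₂':ℂ) ^ 2) =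
      ((l₁:ℂ) * (Real.cos φ₁:ℂ) ^ 2 + (1 - (l₁:ℂ)) * (Real.cos φ₁':ℂ) ^ 2) -
      ((l₂:ℂ) * (Real.cos φ₂:ℂ) ^ 2 + (1 - (l₂:ℂ)) * (Real.cos φ₂':ℂ) ^ 2) := by
    have h := congrArg (fun x : ℝ => (x : ℂ)) (hα.symm.trans (hc4.trans hβ))
    simpa only [Complex.ofReal_sub, Complex.ofReal_add, Complex.ofReal_mul, Complex.ofReal_pow,
      Complex.ofReal_one] using h
  subst hc4 hα hγ₁ hγ₂
  rw [aux_outer4_bell]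
  ext ⟨i,k⟩ ⟨j,l⟩
  fin_cases i <;> fin_cases k <;> fin_cases j <;> fin_cases l <;>
    simp only [chanCE, chanE, K0, K1, I2, auxMb, Matrix.mul_apply, Matrix.sub_apply,
      Fintype.sum_prod_type, Fin.sum_univ_two, Matrix.conjTranspose_apply, Complex.star_def,
      Matrix.smul_apply, Matrix.add_apply, Matrix.kroneckerMap_apply, Matrix.one_apply,
      Matrix.cons_val', Matrix.cons_val_zero, Matrix.cons_val_one, Matrix.head_cons,
      Matrix.empty_val', Matrix.cons_val_fin_one, Matrix.head_fin_const, Matrix.of_apply,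
      Complex.ofReal_mul, Complex.ofReal_sub, Complex.ofReal_add, Complex.ofReal_pow,
      Complex.ofReal_one, Complex.ofReal_div, Complex.ofReal_neg, map_zero, _root_.map_one,
      Complex.conj_ofReal, mul_zero, zero_mul, add_zero, zero_add, _root_.map_mul,
      smul_eq_mul, Fin.mk_zero, Fin.mk_one, Fin.isValue, if_true, if_false] <;>
    norm_num [Prod.ext_iff, Fin.ext_iff, -Complex.ofReal_cos, -Complex.ofReal_sin,
      -Complex.ofReal_pow, -Complex.ofReal_mul, -Complex.ofReal_one] <;>
    first
      | ring1
      | (linear_combination cβ / 2; done)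
      | (linear_combination (-cβ) / 2; done)
      | (linear_combination
          ((l₁:ℂ) * q1 + ((1:ℂ)-(l₁:ℂ)) * q2 - (l₂:ℂ) * q3 - ((1:ℂ)-(l₂:ℂ)) * q4) / 2; done)
      | (linear_combination
          ((l₁:ℂ) * q1 + ((1:ℂ)-(l₁:ℂ)) * q2 - (l₂:ℂ) * q3 - ((1:ℂ)-(l₂:ℂ)) * q4) / 2
          + cβ / 2; done)
      | (linear_combination
          ((l₁:ℂ) * q1 + ((1:ℂ)-(l₁:ℂ)) * q2 - (l₂:ℂ) * q3 - ((1:ℂ)-(l₂:ℂ)) * q4) / 2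
          - cβ / 2; done)
      | (linear_combination
          ((l₁:ℂ) * p1 + ((1:ℂ)-(l₁:ℂ)) * p2 - (l₂:ℂ) * p3 - ((1:ℂ)-(l₂:ℂ)) * p4) / 2; done)
      | (linear_combination
          ((l₁:ℂ) * p1 + ((1:ℂ)-(l₁:ℂ)) * p2 - (l₂:ℂ) * p3 - ((1:ℂ)-(l₂:ℂ)) * p4) / 2
          + cβ / 2; done)
      | (linear_combination
          ((l₁:ℂ) * p1 + ((1:ℂ)-(l₁:ℂ)) * p2 - (l₂:ℂ) * p3 - ((1:ℂ)-(l₂:ℂ)) * p4) / 2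
          - cβ / 2; done)

end AuxMatrices

section AuxBounds

lemma aux_sandwich_entry_bound {n : Type*} [Fintype n] [DecidableEq n] (A ρ : Matrix n n ℂ)
    (hA : ∀ i j, ‖A i j‖ ≤ 1) (hρ : ∀ i j, ‖ρ i j‖ ≤ 1) (p q : n) :
    ‖(A * ρ * Aᴴ) p q‖ ≤ (Fintype.card n : ℝ)^2 := by
  have hmid : ∀ j, ‖(A * ρ) p j‖ ≤ (Fintype.card n : ℝ) := by
    intro j
    rw [Matrix.mul_apply]
    calc ‖∑ i, A p i * ρ i j‖ ≤ ∑ i, ‖A p i * ρ i j‖ := norm_sum_le _ _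
      _ ≤ ∑ _i : n, (1:ℝ) := by
          apply Finset.sum_le_sum; intro i _
          rw [norm_mul]
          exact mul_le_one₀ (hA p i) (norm_nonneg _) (hρ i j)
      _ = (Fintype.card n : ℝ) := by simp
  rw [Matrix.mul_apply]
  calc ‖∑ j, (A * ρ) p j * (Aᴴ) j q‖ ≤ ∑ j, ‖(A * ρ) p j * (Aᴴ) j q‖ := norm_sum_le _ _
    _ ≤ ∑ _j : n, (Fintype.card n : ℝ) := by
        apply Finset.sum_le_sum; intro j _
        rw [norm_mul]
        calc ‖(A * ρ) p j‖ * ‖(Aᴴ) j q‖ ≤ (Fintype.card n : ℝ) * 1 := by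
              apply mul_le_mul (hmid j) ?_ (norm_nonneg _) (Nat.cast_nonneg _)
              rw [Matrix.conjTranspose_apply]
              simpa using hA q j
          _ = (Fintype.card n : ℝ) := mul_one _
    _ = (Fintype.card n : ℝ)^2 := by simp [sq]

lemma aux_kron_K0_entry (φ θ : ℝ) : ∀ i j, ‖(I2 ⊗ₖ K0 φ θ) i j‖ ≤ 1 := by
  rintro ⟨a,b⟩ ⟨c,d⟩
  rw [Matrix.kroneckerMap_apply, norm_mul]
  have h1 : ‖I2 a c‖ ≤ 1 := by
    unfold I2; rw [Matrix.one_apply]; split <;> simp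
  have h2 : ‖K0 φ θ b d‖ ≤ 1 := by
    fin_cases b <;> fin_cases d <;>
      simp only [K0, Matrix.cons_val', Matrix.cons_val_zero, Matrix.cons_val_one,
        Matrix.head_cons, Matrix.empty_val', Matrix.cons_val_fin_one, Matrix.head_fin_const,
        Matrix.of_apply, Fin.mk_zero, Fin.mk_one, Fin.isValue] <;>
      first
        | (rw [Complex.norm_real, Real.norm_eq_abs]; exact Real.abs_cos_le_one _)
        | norm_num
  exact mul_le_one₀ h1 (norm_nonneg _) h2

lemma aux_kron_K1_entry (φ θ : ℝ) : ∀ i j, ‖(I2 ⊗ₖ K1 φ θ) i j‖ ≤ 1 := by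
  rintro ⟨a,b⟩ ⟨c,d⟩
  rw [Matrix.kroneckerMap_apply, norm_mul]
  have h1 : ‖I2 a c‖ ≤ 1 := by
    unfold I2; rw [Matrix.one_apply]; split <;> simp
  have h2 : ‖K1 φ θ b d‖ ≤ 1 := by
    fin_cases b <;> fin_cases d <;>
      simp only [K1, Matrix.cons_val', Matrix.cons_val_zero, Matrix.cons_val_one,
        Matrix.head_cons, Matrix.empty_val', Matrix.cons_val_fin_one, Matrix.head_fin_const,
        Matrix.of_apply, Fin.mk_zero, Fin.mk_one, Fin.isValue] <;>
      first
        | (rw [Complex.norm_real, Real.norm_eq_abs]; exact Real.abs_sin_le_one _)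
        | norm_num
  exact mul_le_one₀ h1 (norm_nonneg _) h2

lemma aux_outer4_entry (w : EuclideanSpace ℂ (Fin 2 × Fin 2)) (hw : ‖w‖ = 1) :
    ∀ i j, ‖outer4 w i j‖ ≤ 1 := by
  have hcoord : ∀ i, ‖w i‖ ≤ 1 := by
    intro i
    have hnn : 0 ≤ ∑ j, ‖w j‖^2 := Finset.sum_nonneg fun j _ => sq_nonneg _
    have h2 : Real.sqrt (∑ j, ‖w j‖ ^ 2) = 1 := by
      rw [← EuclideanSpace.norm_eq w, hw]
    have h1 : ∑ j, ‖w j‖^2 = 1 := by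
      rw [← Real.sq_sqrt hnn, h2]; norm_num
    have h3 : ‖w i‖^2 ≤ 1 := by
      rw [← h1]
      exact Finset.single_le_sum (fun j _ => sq_nonneg ‖w j‖) (Finset.mem_univ i)
    nlinarith [norm_nonneg (w i)]
  intro i j
  unfold outer4
  rw [norm_mul, norm_star]
  exact mul_le_one₀ (hcoord i) (norm_nonneg _) (hcoord j)

lemma aux_chanE_entry_bound (φ θ : ℝ) (ρ : Matrix (Fin 2 × Fin 2) (Fin 2 × Fin 2) ℂ)
    (hρ : ∀ i j, ‖ρ i j‖ ≤ 1) (p q : Fin 2 × Fin 2) : ‖chanE φ θ ρ p q‖ ≤ 32 := by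
  unfold chanE
  rw [Matrix.add_apply]
  have h0 := aux_sandwich_entry_bound (I2 ⊗ₖ K0 φ θ) ρ (aux_kron_K0_entry φ θ) hρ p q
  have h1 := aux_sandwich_entry_bound (I2 ⊗ₖ K1 φ θ) ρ (aux_kron_K1_entry φ θ) hρ p q
  have hcard : (Fintype.card (Fin 2 × Fin 2) : ℝ) = 4 := by simp
  rw [hcard] at h0 h1
  calc ‖_ + _‖ ≤ _ := norm_add_le _ _
    _ ≤ (4:ℝ)^2 + (4:ℝ)^2 := add_le_add h0 h1
    _ = 32 := by norm_num

lemma aux_diff_entry_bound (l₁ l₂ θ₁ φ₁ θ₁' φ₁' θ₂ φ₂ θ₂' φ₂' : ℝ)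
    (hl₁ : l₁ ∈ Set.Ioo (0:ℝ) 1) (hl₂ : l₂ ∈ Set.Ioo (0:ℝ) 1)
    (ρ : Matrix (Fin 2 × Fin 2) (Fin 2 × Fin 2) ℂ) (hρ : ∀ i j, ‖ρ i j‖ ≤ 1)
    (p q : Fin 2 × Fin 2) :
    ‖(chanCE l₁ φ₁ θ₁ φ₁' θ₁' ρ - chanCE l₂ φ₂ θ₂ φ₂' θ₂' ρ) p q‖ ≤ 128 := by
  obtain ⟨h10, h11⟩ := hl₁
  obtain ⟨h20, h21⟩ := hl₂
  simp only [chanCE, Matrix.sub_apply, Matrix.add_apply, Matrix.smul_apply, smul_eq_mul]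
  have e1 := aux_chanE_entry_bound φ₁ θ₁ ρ hρ p q
  have e2 := aux_chanE_entry_bound φ₁' θ₁' ρ hρ p q
  have e3 := aux_chanE_entry_bound φ₂ θ₂ ρ hρ p q
  have e4 := aux_chanE_entry_bound φ₂' θ₂' ρ hρ p q
  have hn : ∀ (l : ℝ) (z : ℂ), 0 ≤ l → l ≤ 1 → ‖z‖ ≤ 32 → ‖(l:ℂ) * z‖ ≤ 32 := by
    intro l z h0 h1 hz
    rw [norm_mul, Complex.norm_real]
    calc |l| * ‖z‖ ≤ 1 * 32 := by
          apply mul_le_mul _ hz (norm_nonneg _) (by norm_num)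
          rw [abs_of_nonneg h0]; exact h1
      _ = 32 := by norm_num
  calc ‖(l₁:ℂ) * chanE φ₁ θ₁ ρ p q + ((1 - l₁ : ℝ):ℂ) * chanE φ₁' θ₁' ρ p q -
        ((l₂:ℂ) * chanE φ₂ θ₂ ρ p q + ((1 - l₂ : ℝ):ℂ) * chanE φ₂' θ₂' ρ p q)‖
      ≤ ‖(l₁:ℂ) * chanE φ₁ θ₁ ρ p q + ((1 - l₁ : ℝ):ℂ) * chanE φ₁' θ₁' ρ p q‖ +
        ‖(l₂:ℂ) * chanE φ₂ θ₂ ρ p q + ((1 - l₂ : ℝ):ℂ) * chanE φ₂' θ₂' ρ p q‖ :=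
        norm_sub_le _ _
    _ ≤ (‖(l₁:ℂ) * chanE φ₁ θ₁ ρ p q‖ + ‖((1 - l₁ : ℝ):ℂ) * chanE φ₁' θ₁' ρ p q‖) +
        (‖(l₂:ℂ) * chanE φ₂ θ₂ ρ p q‖ + ‖((1 - l₂ : ℝ):ℂ) * chanE φ₂' θ₂' ρ p q‖) :=
        add_le_add (norm_add_le _ _) (norm_add_le _ _)
    _ ≤ (32 + 32) + (32 + 32) := by
        apply add_le_add (add_le_add ?_ ?_) (add_le_add ?_ ?_)
        · exact hn l₁ _ (le_of_lt h10) (le_of_lt h11) e1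
        · exact hn (1 - l₁) _ (by linarith) (by linarith) e2
        · exact hn l₂ _ (le_of_lt h20) (le_of_lt h21) e3
        · exact hn (1 - l₂) _ (by linarith) (by linarith) e4
    _ = 128 := by norm_num

end AuxBounds

theorem nonextreme_B1_side_entanglement_useful
    (l₁ l₂ θ₁ φ₁ θ₁' φ₁' θ₂ φ₂ θ₂' φ₂' : ℝ)
    (hl₁ : l₁ ∈ Set.Ioo (0 : ℝ) 1) (hl₂ : l₂ ∈ Set.Ioo (0 : ℝ) 1)
    (hθ₁ : θ₁ ∈ Set.Icc 0 Real.pi) (hφ₁ : φ₁ ∈ Set.Icc 0 Real.pi)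
    (hθ₁' : θ₁' ∈ Set.Icc 0 Real.pi) (hφ₁' : φ₁' ∈ Set.Icc 0 Real.pi)
    (hθ₂ : θ₂ ∈ Set.Icc 0 Real.pi) (hφ₂ : φ₂ ∈ Set.Icc 0 Real.pi)
    (hθ₂' : θ₂' ∈ Set.Icc 0 Real.pi) (hφ₂' : φ₂' ∈ Set.Icc 0 Real.pi)
    (α β γ₁ γ₂ : ℝ)
    (hα : α = (l₁ * Real.cos θ₁ ^ 2 + (1 - l₁) * Real.cos θ₁' ^ 2) -
              (l₂ * Real.cos θ₂ ^ 2 + (1 - l₂) * Real.cos θ₂' ^ 2))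
    (hβ : β = (l₁ * Real.cos φ₁ ^ 2 + (1 - l₁) * Real.cos φ₁' ^ 2) -
              (l₂ * Real.cos φ₂ ^ 2 + (1 - l₂) * Real.cos φ₂' ^ 2))
    (hγ₁ : γ₁ = l₁ * Real.cos φ₁ * Real.cos θ₁ + (1 - l₁) * Real.cos φ₁' * Real.cos θ₁' -
                l₂ * Real.cos φ₂ * Real.cos θ₂ - (1 - l₂) * Real.cos φ₂' * Real.cos θ₂')
    (hγ₂ : γ₂ = l₁ * Real.sin φ₁ * Real.sin θ₁ + (1 - l₁) * Real.sin φ₁' * Real.sin θ₁' -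
                l₂ * Real.sin φ₂ * Real.sin θ₂ - (1 - l₂) * Real.sin φ₂' * Real.sin θ₂')
    (γM : ℝ) (hγM : γM = if |γ₂| ≤ |γ₁| then γ₁ else γ₂)
    (γm : ℝ) (hγm : γm = if |γ₁| ≤ |γ₂| then γ₁ else γ₂)
    (hc1 : γm ^ 2 < α * β) (hc2 : α * β < γM ^ 2)
    (hc3 : |γ₁| + |γ₂| > |α + β|) (hc4 : α = β) (hc5 : |γm| ≠ |α|) :
    S2c l₁ φ₁ θ₁ φ₁' θ₁' l₂ φ₂ θ₂ φ₂' θ₂' > S1c l₁ φ₁ θ₁ φ₁' θ₁' l₂ φ₂ θ₂ φ₂' θ₂' := by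
  obtain ⟨hl₁0, hl₁1⟩ := hl₁
  obtain ⟨hl₂0, hl₂1⟩ := hl₂
  set G : ℝ := |γ₁| + |γ₂| with hG
  have hGnn : 0 ≤ G := add_nonneg (abs_nonneg _) (abs_nonneg _)
  have hab : α * β = α ^ 2 := by rw [← hc4]; ring
  have h4a : 4 * α ^ 2 ≤ G ^ 2 := by
    have h2a : |α + β| = 2 * |α| := by
      rw [← hc4, show α + α = 2 * α by ring, abs_mul]; norm_num
    have h2b : 2 * |α| < G := by rw [← h2a]; exact hc3
    have h2c : (2*|α|)^2 ≤ G^2 := pow_le_pow_left₀ (by positivity) (le_of_lt h2b) 2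
    have h2d : (2*|α|)^2 = 4*α^2 := by rw [mul_pow, sq_abs]; norm_num
    linarith
  -- Step 1 : the unassisted distinguishability is at most G
  have hS1 : S1c l₁ φ₁ θ₁ φ₁' θ₁' l₂ φ₂ θ₂ φ₂' θ₂' ≤ G := by
    haveI hne : Nonempty {v : EuclideanSpace ℂ (Fin 2) // ‖v‖ = 1} :=
      ⟨⟨EuclideanSpace.single 0 1, by simp [EuclideanSpace.norm_single]⟩⟩
    apply ciSup_le
    rintro ⟨v, hv⟩
    rw [aux_chanC_diff l₁ l₂ θ₁ φ₁ θ₁' φ₁' θ₂ φ₂ θ₂' φ₂' α β γ₁ γ₂ hα hβ hγ₁ hγ₂ v]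
    refine le_trans (aux_traceNorm_le_sqrt _) ?_
    set na := Complex.normSq (v 0) with hna
    set nb := Complex.normSq (v 1) with hnb
    set z : ℂ := (γ₁:ℂ) * (v 0 * star (v 1)) + (γ₂:ℂ) * (star (v 0) * v 1) with hzdef
    have hzconj : (γ₁:ℂ) * (star (v 0) * v 1) + (γ₂:ℂ) * (v 0 * star (v 1))
        = star z := by
      rw [hzdef]
      simp only [Complex.star_def, _root_.map_add, _root_.map_mul, Complex.conj_ofReal,
        Complex.conj_conj]
      try ring
    have hfrob : auxFrobSq
        !![((α * na - β * nb : ℝ) : ℂ),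
           (γ₁:ℂ) * (v 0 * star (v 1)) + (γ₂:ℂ) * (star (v 0) * v 1);
           (γ₁:ℂ) * (star (v 0) * v 1) + (γ₂:ℂ) * (v 0 * star (v 1)),
           ((β * nb - α * na : ℝ) : ℂ)]
        = (α * na - β * nb)^2 + (β * nb - α * na)^2 + 2 * Complex.normSq z := by
      rw [hzconj, ← hzdef]
      simp only [auxFrobSq, Fin.sum_univ_two, Matrix.cons_val', Matrix.cons_val_zero,
        Matrix.cons_val_one, Matrix.head_cons, Matrix.empty_val', Matrix.cons_val_fin_one,
        Matrix.head_fin_const, Matrix.of_apply, Complex.normSq_ofReal]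
      rw [show star z = (starRingEnd ℂ) z from rfl, Complex.normSq_conj]
      ring
    -- basic facts about the unit vector
    have hnn : 0 ≤ ∑ j, ‖v j‖^2 := Finset.sum_nonneg fun j _ => sq_nonneg _
    have h2 : Real.sqrt (∑ j, ‖v j‖ ^ 2) = 1 := by rw [← EuclideanSpace.norm_eq v, hv]
    have h1 : ∑ j, ‖v j‖^2 = 1 := by rw [← Real.sq_sqrt hnn, h2]; norm_num
    have hsum : na + nb = 1 := by
      rw [hna, hnb, Complex.normSq_eq_norm_sq, Complex.normSq_eq_norm_sq]
      rw [Fin.sum_univ_two] at h1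
      exact h1
    have hna0 : 0 ≤ na := Complex.normSq_nonneg _
    have hnb0 : 0 ≤ nb := Complex.normSq_nonneg _
    have hzb : Complex.normSq z ≤ G^2 * (na * nb) := by
      have hu : ‖v 0 * star (v 1)‖ = ‖v 0‖ * ‖v 1‖ := by rw [norm_mul, norm_star]
      have hu2 : ‖star (v 0) * v 1‖ = ‖v 0‖ * ‖v 1‖ := by
        rw [norm_mul, norm_star, mul_comm]
      have h5 : ‖z‖ ≤ G * (‖v 0‖ * ‖v 1‖) := by
        calc ‖z‖ ≤ ‖(γ₁:ℂ) * (v 0 * star (v 1))‖ + ‖(γ₂:ℂ) * (star (v 0) * v 1)‖ :=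
              norm_add_le _ _
          _ = G * (‖v 0‖ * ‖v 1‖) := by
              simp only [norm_mul, norm_star, Complex.norm_real, Real.norm_eq_abs, hG]
              ring
      have h6 : Complex.normSq z = ‖z‖^2 := by
        rw [Complex.normSq_eq_norm_sq]
      have h7 : ‖z‖^2 ≤ (G * (‖v 0‖ * ‖v 1‖))^2 :=
        pow_le_pow_left₀ (norm_nonneg _) h5 2
      have h8 : (G * (‖v 0‖ * ‖v 1‖))^2 = G^2 * (na * nb) := by
        rw [hna, hnb, Complex.normSq_eq_norm_sq, Complex.normSq_eq_norm_sq]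
        ring
      rw [h6, ← h8]; exact h7
    rw [hfrob]
    have hcard : (Fintype.card (Fin 2) : ℝ) = 2 := by simp
    rw [hcard]
    clear_value na nb z
    have hkey : 2 * ((α * na - β * nb)^2 + (β * nb - α * na)^2 + 2 * Complex.normSq z)
        ≤ G^2 := by
      rw [← hc4]
      have e1 : (α * na - α * nb)^2 = α^2 * (na - nb)^2 := by ring
      have e2 : (α * nb - α * na)^2 = α^2 * (na - nb)^2 := by ring
      rw [e1, e2]
      have e3 : (na - nb)^2 + 4 * (na * nb) = 1 := by linear_combination (na+nb+1) * hsum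
      have k1 : (4 * α^2) * (na - nb)^2 ≤ G^2 * (na - nb)^2 :=
        mul_le_mul_of_nonneg_right h4a (sq_nonneg (na - nb))
      have e4 : G^2 * (na - nb)^2 + 4 * (G^2 * (na * nb)) = G^2 := by
        calc G^2 * (na - nb)^2 + 4 * (G^2 * (na * nb))
            = G^2 * ((na - nb)^2 + 4 * (na * nb)) := by ring
          _ = G^2 * 1 := by rw [e3]
          _ = G^2 := mul_one _
      linarith [k1, hzb, e4]
    calc Real.sqrt (2 * ((α * na - β * nb)^2 + (β * nb - α * na)^2 + 2 * Complex.normSq z))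
        ≤ Real.sqrt (G^2) := Real.sqrt_le_sqrt hkey
      _ = G := Real.sqrt_sq hGnn
  -- Step 2 : lower bound for the assisted distinguishability from the Bell state
  set s₁ : ℝ := if 0 ≤ α + γ₁ then 1 else -1 with hs₁
  set s₂ : ℝ := if 0 ≤ α - γ₁ then 1 else -1 with hs₂
  set s₃ : ℝ := if 0 ≤ -α + γ₂ then 1 else -1 with hs₃
  set s₄ : ℝ := if 0 ≤ -α - γ₂ then 1 else -1 with hs₄
  have hsq : ∀ x:ℝ, (if 0 ≤ x then (1:ℝ) else -1)^2 = 1 := by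
    intro x; by_cases h : 0 ≤ x <;> simp [h]
  have habs : ∀ x:ℝ, x * (if 0 ≤ x then (1:ℝ) else -1) = |x| := by
    intro x; by_cases h : 0 ≤ x
    · rw [if_pos h, mul_one, abs_of_nonneg h]
    · rw [if_neg h, abs_of_neg (lt_of_not_ge h)]; ring
  have hMb := aux_chanCE_diff_bell l₁ l₂ θ₁ φ₁ θ₁' φ₁' θ₂ φ₂ θ₂' φ₂' α β γ₁ γ₂
    hα hβ hγ₁ hγ₂ hc4
  have hT : ((α+γ₁)*s₁ + (α-γ₁)*s₂ + (-α+γ₂)*s₃ + (-α-γ₂)*s₄)/4*2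
      = (|α+γ₁| + |α-γ₁| + |-α+γ₂| + |-α-γ₂|)/2 := by
    rw [hs₁, hs₂, hs₃, hs₄, habs (α+γ₁), habs (α-γ₁), habs (-α+γ₂), habs (-α-γ₂)]
    ring
  have hlow : (|α+γ₁| + |α-γ₁| + |-α+γ₂| + |-α-γ₂|)/2
      ≤ S2c l₁ φ₁ θ₁ φ₁' θ₁' l₂ φ₂ θ₂ φ₂' θ₂' := by
    have h6 := aux_re_trace_mul_le (auxMb α γ₁ γ₂) (auxMb_isHermitian α γ₁ γ₂)
      (auxBd s₁ s₂ s₃ s₄)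
      (auxBd_unitary s₁ s₂ s₃ s₄ (by rw [hs₁]; exact hsq _) (by rw [hs₂]; exact hsq _)
        (by rw [hs₃]; exact hsq _) (by rw [hs₄]; exact hsq _))
    rw [auxMb_trace_Bd, Complex.ofReal_re, hT] at h6
    have hbdd : BddAbove (Set.range fun w : {w : EuclideanSpace ℂ (Fin 2 × Fin 2) // ‖w‖ = 1} =>
        traceNorm (chanCE l₁ φ₁ θ₁ φ₁' θ₁' (outer4 w.1) - chanCE l₂ φ₂ θ₂ φ₂' θ₂' (outer4 w.1))) := by
      refine ⟨Real.sqrt ((Fintype.card (Fin 2 × Fin 2) : ℝ) * (16 * 128^2)), ?_⟩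
      rintro x ⟨⟨w, hw⟩, rfl⟩
      refine le_trans (aux_traceNorm_le_sqrt _) (Real.sqrt_le_sqrt ?_)
      have hfs : auxFrobSq (chanCE l₁ φ₁ θ₁ φ₁' θ₁' (outer4 w) -
          chanCE l₂ φ₂ θ₂ φ₂' θ₂' (outer4 w)) ≤ 16 * 128^2 := by
        unfold auxFrobSq
        have hentry : ∀ p q : Fin 2 × Fin 2,
            Complex.normSq ((chanCE l₁ φ₁ θ₁ φ₁' θ₁' (outer4 w) -
              chanCE l₂ φ₂ θ₂ φ₂' θ₂' (outer4 w)) p q) ≤ 128^2 := by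
          intro p q
          have hb := aux_diff_entry_bound l₁ l₂ θ₁ φ₁ θ₁' φ₁' θ₂ φ₂ θ₂' φ₂'
            ⟨hl₁0, hl₁1⟩ ⟨hl₂0, hl₂1⟩ (outer4 w) (aux_outer4_entry w hw) p q
          have : Complex.normSq ((chanCE l₁ φ₁ θ₁ φ₁' θ₁' (outer4 w) -
              chanCE l₂ φ₂ θ₂ φ₂' θ₂' (outer4 w)) p q)
              = ‖(chanCE l₁ φ₁ θ₁ φ₁' θ₁' (outer4 w) -
                  chanCE l₂ φ₂ θ₂ φ₂' θ₂' (outer4 w)) p q‖^2 := by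
            rw [Complex.normSq_eq_norm_sq]
          rw [this]
          exact pow_le_pow_left₀ (norm_nonneg _) hb 2
        calc ∑ p, ∑ q, Complex.normSq ((chanCE l₁ φ₁ θ₁ φ₁' θ₁' (outer4 w) -
              chanCE l₂ φ₂ θ₂ φ₂' θ₂' (outer4 w)) p q)
            ≤ ∑ _p : Fin 2 × Fin 2, ∑ _q : Fin 2 × Fin 2, (128:ℝ)^2 := by
              apply Finset.sum_le_sum; intro p _
              apply Finset.sum_le_sum; intro q _
              exact hentry p q
          _ = 16 * 128^2 := by
              simp only [Finset.sum_const, Finset.card_univ, nsmul_eq_mul]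
              norm_num
      have hc4' : (Fintype.card (Fin 2 × Fin 2) : ℝ) = 4 := by simp
      rw [hc4']
      exact mul_le_mul_of_nonneg_left hfs (by norm_num)
    have h9 := le_ciSup hbdd
      (⟨auxBell, auxBell_norm⟩ : {w : EuclideanSpace ℂ (Fin 2 × Fin 2) // ‖w‖ = 1})
    simp only at h9
    rw [hMb] at h9
    exact le_trans h6 h9
  -- Step 3 : G is strictly below the Bell value
  have t1 : 2*|α| ≤ |α+γ₁| + |α-γ₁| := by
    calc 2*|α| = |(α+γ₁)+(α-γ₁)| := by
          rw [show (α+γ₁)+(α-γ₁) = 2*α by ring, abs_mul]; norm_num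
      _ ≤ |α+γ₁| + |α-γ₁| := abs_add_le _ _
  have t2 : 2*|γ₁| ≤ |α+γ₁| + |α-γ₁| := by
    calc 2*|γ₁| = |(α+γ₁)-(α-γ₁)| := by
          rw [show (α+γ₁)-(α-γ₁) = 2*γ₁ by ring, abs_mul]; norm_num
      _ ≤ |α+γ₁| + |α-γ₁| := abs_sub _ _
  have t3 : 2*|α| ≤ |-α+γ₂| + |-α-γ₂| := by
    calc 2*|α| = |(-α+γ₂)+(-α-γ₂)| := by
          rw [show (-α+γ₂)+(-α-γ₂) = 2*(-α) by ring, abs_mul, abs_neg]; norm_num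
      _ ≤ |-α+γ₂| + |-α-γ₂| := abs_add_le _ _
  have t4 : 2*|γ₂| ≤ |-α+γ₂| + |-α-γ₂| := by
    calc 2*|γ₂| = |(-α+γ₂)-(-α-γ₂)| := by
          rw [show (-α+γ₂)-(-α-γ₂) = 2*γ₂ by ring, abs_mul]; norm_num
      _ ≤ |-α+γ₂| + |-α-γ₂| := abs_sub _ _
  have hstep : G < (|α+γ₁| + |α-γ₁| + |-α+γ₂| + |-α-γ₂|)/2 := by
    rcases le_or_gt |γ₁| |γ₂| with hcase | hcase
    · have hγm' : γm = γ₁ := by rw [hγm, if_pos hcase]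
      rw [hγm', hab] at hc1
      have hlt : |γ₁| < |α| := by
        have h10 := Real.sqrt_lt_sqrt (sq_nonneg γ₁) hc1
        rwa [Real.sqrt_sq_eq_abs, Real.sqrt_sq_eq_abs] at h10
      rw [hG]; linarith [t1, t4]
    · have hγm' : γm = γ₂ := by rw [hγm, if_neg (not_le.mpr hcase)]
      rw [hγm', hab] at hc1
      have hlt : |γ₂| < |α| := by
        have h10 := Real.sqrt_lt_sqrt (sq_nonneg γ₂) hc1
        rwa [Real.sqrt_sq_eq_abs, Real.sqrt_sq_eq_abs] at h10
      rw [hG]; linarith [t2, t3]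
  linarith [hS1, hlow, hstep]
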